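/- arXiv:1403.0212 — 5 statements merged into one kernel-verified Lean document; each statement's English description precedes it below -/
import Mathlib

section
/- Let g ∈ ℂ[z,u] be a polynomial in the square of the maximal ideal (z,u), written g = Σ_{i,j} a_{i,j} z^i u^j, and suppose σ(g) = -g, where σ is the ℂ-algebra automorphism of ℂ[z,u] determined by σ(z) = -z and σ(u) = √-1·u, and suppose a_{0,2} = 0. Then the ℂ-vector space ℂ[z,u]/(g, ∂g/∂z, ∂g/∂u) has dimension at least 6; in fact the images of 1, z, u, zu, u², u³ in this quotient are linearly independent over ℂ. -/
/-!
Write `z = X 0`, `u = X 1`. Anti-invariance under `σ` forces every monomial `z^i u^j` of `g` to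
have `i` odd and `j ≡ 0 mod 4`, or `i` even and `j ≡ 2 mod 4`; together with `i + j ≥ 2` and
`a_{0,2} = 0` this puts `g` and both of its partial derivatives into the monomial ideal
`J = (z², zu², u⁴)`. The monomials `1, z, u, zu, u², u³` are exactly those outside `J`, so they are
independent modulo `J`, hence modulo the smaller ideal `(g, ∂g/∂z, ∂g/∂u)`.
-/

open MvPolynomial

namespace MvPolynomial

variable {σ R : Type*}

section CommSemiring

variable [CommSemiring R]

theorem pderiv_mem_restrictSupport {i : σ} {s t : Set (σ →₀ ℕ)}
    (hst : ∀ w, w + Finsupp.single i 1 ∈ s → w ∈ t) {p : MvPolynomial σ R}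
    (hp : p ∈ restrictSupport R s) : pderiv i p ∈ restrictSupport R t := by
  rw [mem_restrictSupport_iff] at hp ⊢
  intro w hw
  rw [Finset.mem_coe, mem_support_iff, coeff_pderiv] at hw
  exact hst w (hp (mem_support_iff.2 (left_ne_zero_of_mul hw)))

theorem algHom_monomial_of_map_X_eq_C_mul_X (φ : MvPolynomial σ R →ₐ[R] MvPolynomial σ R)
    {c : σ → R} (hφ : ∀ i, φ (X i) = C (c i) * X i) (w : σ →₀ ℕ) (a : R) :
    φ (monomial w a) = monomial w ((w.prod fun i n => c i ^ n) * a) := by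
  simp only [monomial_eq, map_mul, algHom_C, map_finsuppProd, map_pow, hφ, mul_pow, algebraMap_eq,
    Finsupp.prod_mul]
  ring

theorem coeff_algHom_of_map_X_eq_C_mul_X (φ : MvPolynomial σ R →ₐ[R] MvPolynomial σ R)
    {c : σ → R} (hφ : ∀ i, φ (X i) = C (c i) * X i) (p : MvPolynomial σ R) (w : σ →₀ ℕ) :
    coeff w (φ p) = (w.prod fun i n => c i ^ n) * coeff w p := by
  classical
  induction p using MvPolynomial.induction_on' with
  | add p q hp hq => simp only [map_add, coeff_add, hp, hq, mul_add]
  | monomial v a =>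
    rw [algHom_monomial_of_map_X_eq_C_mul_X φ hφ, coeff_monomial, coeff_monomial]
    split_ifs with h
    · rw [h]
    · rw [mul_zero]

end CommSemiring

section CommRing

variable [CommRing R]

theorem prod_pow_eq_neg_one_of_coeff_ne_zero [NoZeroDivisors R]
    (φ : MvPolynomial σ R →ₐ[R] MvPolynomial σ R) {c : σ → R}
    (hφ : ∀ i, φ (X i) = C (c i) * X i) {p : MvPolynomial σ R} (hp : φ p = -p)
    {w : σ →₀ ℕ} (hw : coeff w p ≠ 0) : (w.prod fun i n => c i ^ n) = -1 := by
  have h := coeff_algHom_of_map_X_eq_C_mul_X φ hφ p w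
  rw [hp, coeff_neg] at h
  exact mul_right_cancel₀ hw (by rw [← h, neg_one_mul])

theorem linearIndependent_mk_monomial_of_notMem {s : Set (σ →₀ ℕ)} (hs : IsUpperSet s)
    {ι : Type*} {e : ι → σ →₀ ℕ} (he : Function.Injective e) (hes : ∀ k, e k ∉ s) :
    LinearIndependent R fun k =>
      Ideal.Quotient.mk (restrictSupportIdeal R s hs) (monomial (e k) (1 : R)) := by
  classical
  rw [linearIndependent_iff']
  intro t c hc j hj
  have hmem : ∑ k ∈ t, monomial (e k) (c k) ∈ restrictSupportIdeal R s hs := by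
    rw [← Ideal.Quotient.eq_zero_iff_mem, ← hc, map_sum]
    refine Finset.sum_congr rfl fun k _ => ?_
    rw [← Ideal.Quotient.mkₐ_eq_mk R, ← map_smul, smul_monomial, smul_eq_mul, mul_one]
  have hcoeff : coeff (e j) (∑ k ∈ t, monomial (e k) (c k)) = c j := by
    simp [coeff_sum, coeff_monomial, he.eq_iff, hj]
  by_contra hcj
  refine hes j (((mem_restrictSupport_iff R).1 hmem) ?_)
  rw [Finset.mem_coe, mem_support_iff, hcoeff]
  exact hcj

end CommRing

end MvPolynomial

theorem Ideal.Quotient.linearIndependent_mk_of_le {R A ι : Type*} [CommRing R] [CommRing A]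
    [Algebra R A] {I J : Ideal A} (hIJ : I ≤ J) {v : ι → A}
    (hv : LinearIndependent R fun k => Ideal.Quotient.mk J (v k)) :
    LinearIndependent R fun k => Ideal.Quotient.mk I (v k) :=
  hv.of_comp (Ideal.Quotient.factorₐ R hIJ).toLinearMap

theorem Complex.neg_one_pow_mul_I_pow_eq_neg_one_iff {a b : ℕ} :
    (-1 : ℂ) ^ a * I ^ b = -1 ↔ (a % 2 = 1 ∧ b % 4 = 0) ∨ (a % 2 = 0 ∧ b % 4 = 2) := by
  rw [neg_one_pow_eq_pow_mod_two]
  conv_lhs => rw [← Nat.div_add_mod b 4, pow_add, pow_mul, I_pow_four, one_pow, one_mul]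
  have ha : a % 2 < 2 := Nat.mod_lt _ two_pos
  have hb : b % 4 < 4 := Nat.mod_lt _ four_pos
  interval_cases a % 2 <;> interval_cases b % 4 <;> norm_num [pow_succ, Complex.ext_iff]

def staircase : Set (Fin 2 →₀ ℕ) := {w | 2 ≤ w 0 ∨ (1 ≤ w 0 ∧ 2 ≤ w 1) ∨ 4 ≤ w 1}

theorem isUpperSet_staircase : IsUpperSet staircase := by
  intro v w hvw hv
  have h0 := hvw 0
  have h1 := hvw 1
  simp only [staircase, Set.mem_ofPred_eq] at hv ⊢
  omega

def admissibleExponents : Set (Fin 2 →₀ ℕ) :=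
  {w | 2 ≤ w 0 + w 1 ∧ ¬(w 0 = 0 ∧ w 1 = 2) ∧
    ((w 0 % 2 = 1 ∧ w 1 % 4 = 0) ∨ (w 0 % 2 = 0 ∧ w 1 % 4 = 2))}

theorem admissibleExponents_subset_staircase : admissibleExponents ⊆ staircase := by
  intro w hw
  simp only [admissibleExponents, staircase, Set.mem_ofPred_eq] at hw ⊢
  omega

theorem mem_staircase_of_add_single_mem_admissibleExponents {w : Fin 2 →₀ ℕ} (i : Fin 2)
    (hw : w + Finsupp.single i 1 ∈ admissibleExponents) : w ∈ staircase := by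
  simp only [admissibleExponents, staircase, Set.mem_ofPred_eq, Finsupp.add_apply,
    Finsupp.single_apply] at hw ⊢
  split_ifs at hw <;> omega

theorem span_jacobian_le_staircase {R : Type*} [CommSemiring R] {g : MvPolynomial (Fin 2) R}
    (hg : g ∈ restrictSupport R admissibleExponents) :
    Ideal.span {g, pderiv 0 g, pderiv 1 g} ≤
      restrictSupportIdeal R staircase isUpperSet_staircase := by
  have hpderiv (i : Fin 2) : pderiv i g ∈ restrictSupport R staircase :=
    pderiv_mem_restrictSupport (fun _ => mem_staircase_of_add_single_mem_admissibleExponents i) hg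
  rw [Ideal.span_le, Set.insert_subset_iff, Set.insert_subset_iff, Set.singleton_subset_iff]
  exact ⟨restrictSupport_mono R admissibleExponents_subset_staircase hg, hpderiv 0, hpderiv 1⟩

theorem support_subset_admissibleExponents {g : MvPolynomial (Fin 2) ℂ}
    (hmem : g ∈ (Ideal.span {(X 0 : MvPolynomial (Fin 2) ℂ), X 1}) ^ 2)
    (σ : MvPolynomial (Fin 2) ℂ →ₐ[ℂ] MvPolynomial (Fin 2) ℂ)
    (hz : σ (X 0) = -X 0) (hu : σ (X 1) = C Complex.I * X 1) (hg : σ g = -g)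
    (h02 : coeff (Finsupp.single 1 2) g = 0) :
    g ∈ restrictSupport ℂ admissibleExponents := by
  have hvars : Ideal.span {(X 0 : MvPolynomial (Fin 2) ℂ), X 1} = idealOfVars (Fin 2) ℂ := by
    rw [idealOfVars]
    congr 1
    ext p
    simp [Fin.exists_fin_two, eq_comm]
  have hσ (i : Fin 2) : σ (X i) = C (![-1, Complex.I] i) * X i := by
    fin_cases i
    · simp [hz]
    · exact hu
  rw [mem_restrictSupport_iff]
  intro w hw
  have hdeg := (mem_pow_idealOfVars_iff 2 g).1 (hvars ▸ hmem) w hw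
  rw [Finset.mem_coe, mem_support_iff] at hw
  rw [Finsupp.degree_eq_sum, Fin.sum_univ_two] at hdeg
  refine ⟨hdeg, ?_, ?_⟩
  · rintro ⟨h0, h1⟩
    apply hw
    convert h02
    ext i
    fin_cases i <;> simp [h0, h1]
  · rw [← Complex.neg_one_pow_mul_I_pow_eq_neg_one_iff]
    have hprod := prod_pow_eq_neg_one_of_coeff_ne_zero σ hσ hg hw
    rwa [Finsupp.prod_fintype _ _ (by simp), Fin.prod_univ_two] at hprod

noncomputable def standardExponent (k : Fin 6) : Fin 2 →₀ ℕ :=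
  Finsupp.single 0 (![0, 1, 0, 1, 0, 0] k) + Finsupp.single 1 (![0, 0, 1, 1, 2, 3] k)

theorem standardExponent_injective : Function.Injective standardExponent := by
  intro k l h
  have h0 := congr($h 0)
  have h1 := congr($h 1)
  simp only [standardExponent, Finsupp.add_apply, Finsupp.single_apply] at h0 h1
  fin_cases k <;> fin_cases l <;> simp_all

theorem standardExponent_notMem_staircase (k : Fin 6) : standardExponent k ∉ staircase := by
  fin_cases k <;> simp [standardExponent, staircase]

theorem monomial_standardExponent (k : Fin 6) :
    monomial (standardExponent k) (1 : ℂ) = ![1, X 0, X 1, X 0 * X 1, X 1 ^ 2, X 1 ^ 3] k := by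
  fin_cases k <;> simp [standardExponent, monomial_add_single, ← X_pow_eq_monomial]

/-- Let `g ∈ ℂ[z,u]` belong to the square of the maximal ideal `(z,u)`, satisfy
`σ(g) = -g` for the ℂ-algebra automorphism `σ` with `σ(z) = -z`, `σ(u) = √-1·u`, and have
vanishing `u²`-coefficient. Then the images of `1, z, u, zu, u², u³` in
`ℂ[z,u]/(g, ∂g/∂z, ∂g/∂u)` are linearly independent over ℂ; in particular this quotient
has ℂ-dimension at least 6. Here `z = X 0`, `u = X 1`. -/
theorem stmt_5 (g : MvPolynomial (Fin 2) ℂ)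
    (hmem : g ∈ (Ideal.span {(X 0 : MvPolynomial (Fin 2) ℂ), X 1}) ^ 2)
    (σ : MvPolynomial (Fin 2) ℂ ≃ₐ[ℂ] MvPolynomial (Fin 2) ℂ)
    (hz : σ (X 0) = -X 0) (hu : σ (X 1) = C Complex.I * X 1)
    (hg : σ g = -g)
    (h02 : coeff (Finsupp.single 1 2) g = 0) :
    LinearIndependent ℂ
      (fun k : Fin 6 =>
        Ideal.Quotient.mk (Ideal.span {g, pderiv 0 g, pderiv 1 g})
          ((![1, X 0, X 1, X 0 * X 1, X 1 ^ 2, X 1 ^ 3] : Fin 6 → MvPolynomial (Fin 2) ℂ) k)) ∧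
    (6 : Cardinal) ≤
      Module.rank ℂ (MvPolynomial (Fin 2) ℂ ⧸ Ideal.span {g, pderiv 0 g, pderiv 1 g}) := by
  have hle := span_jacobian_le_staircase
    (support_subset_admissibleExponents hmem σ.toAlgHom hz hu hg h02)
  have hind := Ideal.Quotient.linearIndependent_mk_of_le hle
    (linearIndependent_mk_monomial_of_notMem isUpperSet_staircase standardExponent_injective
      standardExponent_notMem_staircase)
  simp only [monomial_standardExponent] at hind
  exact ⟨hind, by simpa using hind.cardinal_le_rank⟩
end

section
/- Let h ∈ ℂ⟦z⟧ be a formal power series of finite order k with k ≥ 1, i.e. h = c_k z^k + (terms of order > k) with c_k ≠ 0. Then h is right equivalent to z^k: there exists a ℂ-algebra automorphism φ of ℂ⟦z⟧ such that φ(h) = z^k. -/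
/-!
Write `h = X ^ k * u` with `u` a unit. Since `ℂ⟦X⟧` is `X`-adically complete, hence Henselian,
and `k ≠ 0` in `ℂ`, the simple root `u(0) ^ (1 / k)` of `T ^ k - u(0)` lifts to a `k`-th root `v`
of `u`. Then `h = w ^ k` for `w = X * v`, a series of order one, and substitution of `w` is an
automorphism of `ℂ⟦X⟧` (its inverse is substitution of the compositional inverse of `w`) sending
`X ^ k` to `h`; its inverse sends `h` to `X ^ k`.
-/

open PowerSeries

namespace PowerSeries

theorem exists_pow_eq_of_constantCoeff_ne_zero {K : Type*} [Field K] [IsAlgClosed K] {k : ℕ}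
    (hk : (k : K) ≠ 0) {u : K⟦X⟧} (hu : constantCoeff u ≠ 0) : ∃ v : K⟦X⟧, v ^ k = u := by
  have hk0 : k ≠ 0 := by rintro rfl; exact hk Nat.cast_zero
  obtain ⟨b, hb⟩ := IsAlgClosed.exists_pow_nat_eq (constantCoeff u) (Nat.pos_of_ne_zero hk0)
  have hb0 : b ≠ 0 := by rintro rfl; exact hu (by rw [← hb, zero_pow hk0])
  let f : Polynomial K⟦X⟧ := Polynomial.X ^ k - Polynomial.C u
  have hroot : f.eval (C b) ∈ Ideal.span {(X : K⟦X⟧)} := by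
    rw [Ideal.mem_span_singleton, X_dvd_iff]
    simp [f, hb]
  have hsimple :
      IsUnit (Ideal.Quotient.mk (Ideal.span {(X : K⟦X⟧)}) (f.derivative.eval (C b))) := by
    refine IsUnit.map _ ?_
    have : IsUnit (C ((k : K) * b ^ (k - 1))) :=
      (isUnit_iff_ne_zero.mpr (mul_ne_zero hk (pow_ne_zero _ hb0))).map C
    simpa [f, Polynomial.derivative_X_pow] using this
  obtain ⟨v, hv, -⟩ :=
    HenselianRing.is_henselian f (Polynomial.monic_X_pow_sub_C u hk0) (C b) hroot hsimple
  exact ⟨v, by simpa [f, sub_eq_zero] using hv⟩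

theorem exists_pow_eq_of_coeff_ne_zero {K : Type*} [Field K] [IsAlgClosed K] {k : ℕ}
    (hk : (k : K) ≠ 0) {h : K⟦X⟧} (hck : coeff k h ≠ 0) (hlow : ∀ m < k, coeff m h = 0) :
    ∃ w : K⟦X⟧, constantCoeff w = 0 ∧ IsUnit (coeff 1 w) ∧ w ^ k = h := by
  obtain ⟨u, rfl⟩ := X_pow_dvd_iff.mpr hlow
  rw [coeff_X_pow_mul', if_pos le_rfl, Nat.sub_self, coeff_zero_eq_constantCoeff_apply] at hck
  obtain ⟨v, rfl⟩ := exists_pow_eq_of_constantCoeff_ne_zero hk hck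
  refine ⟨X * v, by simp, ?_, mul_pow X v k⟩
  rw [coeff_succ_X_mul, coeff_zero_eq_constantCoeff_apply, isUnit_iff_ne_zero]
  exact fun hv => hck (by rw [map_pow, hv, zero_pow (by rintro rfl; exact hk Nat.cast_zero)])

section Subst

variable {R : Type*} [CommRing R]

noncomputable def substAlgEquiv (P : R⟦X⟧) (hP : constantCoeff P = 0)
    (hP' : IsUnit (coeff 1 P)) : R⟦X⟧ ≃ₐ[R] R⟦X⟧ :=
  have hsP := HasSubst.of_constantCoeff_zero' hP
  have hsQ := HasSubst.substInvOfIsUnit P hP'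
  AlgEquiv.ofAlgHom (substAlgHom hsP) (substAlgHom hsQ)
    (AlgHom.ext fun f => by
      simp [coe_substAlgHom, subst_comp_subst_apply hsQ hsP,
        subst_substInvOfIsUnit_left P hP hP', X_subst])
    (AlgHom.ext fun f => by
      simp [coe_substAlgHom, subst_comp_subst_apply hsP hsQ,
        subst_substInvOfIsUnit_right P hP hP', X_subst])

theorem substAlgEquiv_apply (P : R⟦X⟧) (hP : constantCoeff P = 0) (hP' : IsUnit (coeff 1 P))
    (f : R⟦X⟧) : substAlgEquiv P hP hP' f = f.subst P := by
  rw [substAlgEquiv, AlgEquiv.ofAlgHom_apply, coe_substAlgHom]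

end Subst

end PowerSeries

/-- A formal power series `h ∈ ℂ⟦z⟧` of finite order `k ≥ 1` (that is, the coefficient of
`z^k` is nonzero and all coefficients in degrees `< k` vanish) is right equivalent to
`z^k`: there is a ℂ-algebra automorphism `φ` of `ℂ⟦z⟧` with `φ(h) = z^k`. -/
theorem stmt_9 (k : ℕ) (hk : 1 ≤ k) (h : PowerSeries ℂ)
    (hck : PowerSeries.coeff k h ≠ 0)
    (hlow : ∀ m : ℕ, m < k → PowerSeries.coeff m h = 0) :
    ∃ φ : PowerSeries ℂ ≃ₐ[ℂ] PowerSeries ℂ, φ h = PowerSeries.X ^ k := by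
  have hk0 : (k : ℂ) ≠ 0 := Nat.cast_ne_zero.mpr (by omega)
  obtain ⟨w, hw0, hw1, rfl⟩ := exists_pow_eq_of_coeff_ne_zero hk0 hck hlow
  refine ⟨(substAlgEquiv w hw0 hw1).symm, ?_⟩
  rw [AlgEquiv.symm_apply_eq, substAlgEquiv_apply, subst_pow (HasSubst.of_constantCoeff_zero' hw0),
    subst_X (HasSubst.of_constantCoeff_zero' hw0)]
end

section
/- Let h₁ ∈ ℂ⟦z,u⟧ lie in the maximal ideal (z,u) and let h₂ ∈ ℂ⟦z⟧, regarded as an element of ℂ⟦z,u⟧. Then u²·(1 + h₁) + h₂ is right equivalent to u² + h₂: there exists a ℂ-algebra automorphism φ of ℂ⟦z,u⟧ with φ(u²·(1 + h₁) + h₂) = u² + h₂. -/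
/-!
Let `s` be the square root of `1 + h₁` with constant coefficient `1`, obtained by substituting
`h₁` into the binomial series of `(1 + X) ^ (1 / 2)`. The substitution `z ↦ z`, `u ↦ u * s` sends
`u² + h₂` to `u² (1 + h₁) + h₂`, because `h₂` does not involve `u`. It is an automorphism: the
coefficient of `x ^ e` in the image of `f` is the coefficient of `x ^ e` in `f` plus a combination
of coefficients of `f` at exponents `< e`, so solving for `f` is a well-founded recursion on the
exponents. Its inverse is the required `φ`.
-/

open MvPowerSeries

namespace MvPowerSeries

variable {σ R : Type*}

theorem bijective_of_coeff_eq_add_sum_Iio [DecidableEq σ] [Ring R]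
    (L : MvPowerSeries σ R → MvPowerSeries σ R) (c : (σ →₀ ℕ) → (σ →₀ ℕ) → R)
    (hL : ∀ f e, coeff e (L f) = coeff e f + ∑ m ∈ Finset.Iio e, coeff m f * c e m) :
    Function.Bijective L := by
  refine ⟨fun f g hfg => ext fun e => ?_, fun g => ?_⟩
  · induction e using WellFoundedLT.induction with
    | _ e ih =>
      have hsum : ∑ m ∈ Finset.Iio e, coeff m f * c e m = ∑ m ∈ Finset.Iio e, coeff m g * c e m :=
        Finset.sum_congr rfl fun m hm => by rw [ih m (Finset.mem_Iio.mp hm)]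
      have := hL f e
      rw [hfg, hL g e, hsum] at this
      exact (add_right_cancel this).symm
  · let f : MvPowerSeries σ R := wellFounded_lt.fix fun e IH =>
      coeff e g - ∑ m ∈ (Finset.Iio e).attach, IH m (Finset.mem_Iio.mp m.2) * c e m
    have hf (e : σ →₀ ℕ) : coeff e f = coeff e g - ∑ m ∈ Finset.Iio e, coeff m f * c e m :=
      (wellFounded_lt.fix_eq _ e).trans
        (congrArg _ (Finset.sum_attach _ fun m => coeff m f * c e m))
    exact ⟨f, ext fun e => by rw [hL, hf, sub_add_cancel]⟩

section SubstXMul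

variable [CommRing R] [Finite σ]

theorem hasSubst_X_mul (s : σ → MvPowerSeries σ R) : HasSubst fun i => X i * s i :=
  hasSubst_of_constantCoeff_zero fun i => by simp

theorem coeff_subst_X_mul [DecidableEq σ] (s : σ → MvPowerSeries σ R) (f : MvPowerSeries σ R)
    (e : σ →₀ ℕ) :
    coeff e (subst (fun i => X i * s i) f) =
      ∑ d ∈ Finset.Iic e, coeff d f * coeff (e - d) (d.prod fun i n => s i ^ n) := by
  have hmon (d : σ →₀ ℕ) :
      (d.prod fun i n => (X i * s i) ^ n) = monomial d 1 * d.prod fun i n => s i ^ n := by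
    simp_rw [mul_pow]
    rw [Finsupp.prod_mul, monomial_one_eq]
  rw [coeff_subst (hasSubst_X_mul s), finsum_eq_sum_of_support_subset (s := Finset.Iic e)]
  · refine Finset.sum_congr rfl fun d hd => ?_
    rw [hmon, coeff_monomial_mul, if_pos (Finset.mem_Iic.mp hd), one_mul, smul_eq_mul]
  · intro d hd
    contrapose! hd
    rw [Function.notMem_support, hmon, coeff_monomial_mul, if_neg (by simpa using hd), smul_zero]

theorem coeff_subst_X_mul_eq_add_sum_Iio [DecidableEq σ] {s : σ → MvPowerSeries σ R}
    (hs : ∀ i, constantCoeff (s i) = 1) (f : MvPowerSeries σ R) (e : σ →₀ ℕ) :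
    coeff e (subst (fun i => X i * s i) f) =
      coeff e f + ∑ d ∈ Finset.Iio e, coeff d f * coeff (e - d) (d.prod fun i n => s i ^ n) := by
  rw [coeff_subst_X_mul, ← Finset.Iio_insert, Finset.sum_insert Finset.notMem_Iio_self, tsub_self,
    coeff_zero_eq_constantCoeff_apply, map_finsuppProd]
  simp [hs]

theorem bijective_subst_X_mul {s : σ → MvPowerSeries σ R} (hs : ∀ i, constantCoeff (s i) = 1) :
    Function.Bijective (subst (R := R) fun i => X i * s i) := by
  classical
  exact bijective_of_coeff_eq_add_sum_Iio _ _ (coeff_subst_X_mul_eq_add_sum_Iio hs)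

noncomputable def substXMulEquiv (s : σ → MvPowerSeries σ R)
    (hs : ∀ i, constantCoeff (s i) = 1) : MvPowerSeries σ R ≃ₐ[R] MvPowerSeries σ R :=
  AlgEquiv.ofBijective (substAlgHom (hasSubst_X_mul s)) <| by
    simpa using bijective_subst_X_mul hs

theorem substXMulEquiv_apply {s : σ → MvPowerSeries σ R} (hs : ∀ i, constantCoeff (s i) = 1)
    (f : MvPowerSeries σ R) : substXMulEquiv s hs f = subst (fun i => X i * s i) f := by
  simp [substXMulEquiv]

theorem subst_X_mul_eq_self {s : σ → MvPowerSeries σ R} {f : MvPowerSeries σ R}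
    (hf : ∀ d i, s i ≠ 1 → d i ≠ 0 → coeff d f = 0) :
    subst (fun i => X i * s i) f = f := by
  classical
  have hprod (d : σ →₀ ℕ) (hd : coeff d f ≠ 0) : (d.prod fun i n => s i ^ n) = 1 :=
    Finset.prod_eq_one fun i hi => by
      by_contra hne
      exact hd (hf d i (fun h => hne (by simp only [h, one_pow])) (Finsupp.mem_support_iff.mp hi))
  have hterm (d e : σ →₀ ℕ) :
      coeff d f * coeff (e - d) (d.prod fun i n => s i ^ n) = coeff d f * coeff (e - d) 1 := by
    by_cases hd : coeff d f = 0
    · simp [hd]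
    · rw [hprod d hd]
  ext e
  rw [coeff_subst_X_mul, Finset.sum_congr rfl fun d _ => hterm d e,
    Finset.sum_eq_single_of_mem e (Finset.mem_Iic.mpr le_rfl)]
  · simp
  · intro d hd hde
    rw [coeff_one, if_neg, mul_zero]
    exact fun h => hde (le_antisymm (Finset.mem_Iic.mp hd) (tsub_eq_zero_iff_le.mp h))

end SubstXMul

theorem exists_sq_eq_one_add {A : Type*} [CommRing A] [Algebra ℚ A] (h : MvPowerSeries σ A)
    (hh : constantCoeff h = 0) : ∃ s, constantCoeff s = 1 ∧ s ^ 2 = 1 + h := by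
  have hB : PowerSeries.binomialSeries A (1 / 2 : ℚ) ^ 2 = 1 + PowerSeries.X := by
    rw [sq, ← PowerSeries.binomialSeries_add, add_halves, ← Nat.cast_one,
      PowerSeries.binomialSeries_nat, pow_one]
  have hsubst := PowerSeries.HasSubst.of_constantCoeff_zero hh
  refine ⟨PowerSeries.subst h (PowerSeries.binomialSeries A (1 / 2 : ℚ)), ?_, ?_⟩
  · rw [PowerSeries.constantCoeff_subst hsubst, finsum_eq_single _ 0 fun d hd => by simp [hh, hd]]
    simp
  · rw [← PowerSeries.subst_pow hsubst, hB, PowerSeries.subst_add hsubst,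
      PowerSeries.subst_X hsubst, ← map_one PowerSeries.C, PowerSeries.subst_C, map_one]

end MvPowerSeries

/-- Let `h₁ ∈ ℂ⟦z,u⟧` lie in the maximal ideal `(z,u)` (i.e. have vanishing constant term)
and let `h₂ ∈ ℂ⟦z⟧ ⊆ ℂ⟦z,u⟧` (i.e. all its coefficients involving `u` vanish). Then
`u²·(1 + h₁) + h₂` is right equivalent to `u² + h₂`: there is a ℂ-algebra automorphism `φ`
of `ℂ⟦z,u⟧` with `φ(u²·(1 + h₁) + h₂) = u² + h₂`. Here `z = X 0`, `u = X 1`. -/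
theorem stmt_10 (h₁ h₂ : MvPowerSeries (Fin 2) ℂ)
    (hh₁ : constantCoeff h₁ = 0)
    (hh₂ : ∀ d : Fin 2 →₀ ℕ, d 1 ≠ 0 → coeff d h₂ = 0) :
    ∃ φ : MvPowerSeries (Fin 2) ℂ ≃ₐ[ℂ] MvPowerSeries (Fin 2) ℂ,
      φ ((X 1) ^ 2 * (1 + h₁) + h₂) = (X 1) ^ 2 + h₂ := by
  obtain ⟨t, ht, ht_sq⟩ := exists_sq_eq_one_add h₁ hh₁
  have hs : ∀ i, constantCoeff (![1, t] i) = 1 := by simp [Fin.forall_fin_two, ht]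
  have hh₂_fixed : subst (fun i => X i * ![1, t] i) h₂ = h₂ :=
    subst_X_mul_eq_self fun d i hi hd => by
      fin_cases i
      · exact absurd rfl hi
      · exact hh₂ d hd
  have hψ : substXMulEquiv ![1, t] hs (X 1 ^ 2 + h₂) = X 1 ^ 2 * (1 + h₁) + h₂ := by
    rw [map_add, map_pow, substXMulEquiv_apply, substXMulEquiv_apply, subst_X (hasSubst_X_mul _),
      hh₂_fixed]
    simp [mul_pow, ht_sq]
  exact ⟨(substXMulEquiv ![1, t] hs).symm, by rw [← hψ, AlgEquiv.symm_apply_apply]⟩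
end

section
/- Let σ be the ℂ-algebra automorphism of ℂ[x,y,z,u] determined by σ(x) = √-1·x, σ(y) = -√-1·y, σ(z) = -z, σ(u) = √-1·u, and let f = x² + y² + z³ + u². Then σ(f) = -f, the Tjurina ideal I = (f, ∂f/∂x, ∂f/∂y, ∂f/∂z, ∂f/∂u) satisfies σ(I) = I, and the subspace of the quotient ℂ[x,y,z,u]/I consisting of images of polynomials h with σ(h) = -h is one-dimensional over ℂ, spanned by the image of z. -/
open MvPolynomial

/-!
The Tjurina ideal is `(x, y, z², u)`, so every polynomial is congruent modulo it to its constant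
term plus its linear `z`-term, and `σ` preserves the Tjurina ideal because it sends each of these
generators to a unit multiple of itself. Since `σ` fixes constant terms, a polynomial with
`σ h = -h` has constant term zero, and its class is a multiple of the class of `z`. That class is
nonzero: evaluating at `x = y = u = 0`, `z = ε` in the dual numbers `ℂ[ε]` kills the ideal but
not `z`.
-/

/-- The polynomial `f = x² + y² + z³ + u² ∈ ℂ[x,y,z,u]`, with `x, y, z, u` being
`X 0, X 1, X 2, X 3`. -/
noncomputable def fA12quot : MvPolynomial (Fin 4) ℂ :=
  X 0 ^ 2 + X 1 ^ 2 + X 2 ^ 3 + X 3 ^ 2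

/-- The Tjurina ideal `(f, ∂f/∂x, ∂f/∂y, ∂f/∂z, ∂f/∂u)` of `f = x² + y² + z³ + u²`. -/
noncomputable def tjurinaA12quot : Ideal (MvPolynomial (Fin 4) ℂ) :=
  Ideal.span {fA12quot, pderiv 0 fA12quot, pderiv 1 fA12quot, pderiv 2 fA12quot,
    pderiv 3 fA12quot}

theorem Associated.span_singleton_eq {R : Type*} [CommSemiring R] {a b : R}
    (h : Associated a b) : Ideal.span {a} = Ideal.span {b} :=
  le_antisymm (Ideal.span_singleton_le_span_singleton.2 h.dvd')
    (Ideal.span_singleton_le_span_singleton.2 h.dvd)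

theorem Ideal.span_insert_eq_span_insert {R : Type*} [CommSemiring R] {a b : R} {s t : Set R}
    (hab : Associated a b) (hst : Ideal.span s = Ideal.span t) :
    Ideal.span (insert a s) = Ideal.span (insert b t) := by
  rw [Ideal.span_insert, Ideal.span_insert, hst, hab.span_singleton_eq]

section SquareOfVariable

variable {R ι : Type*} [CommRing R] {I : Ideal (MvPolynomial ι R)} {i : ι}

theorem MvPolynomial.monomial_mem_of_X_mem_of_X_sq_mem (hX : ∀ j ≠ i, X j ∈ I)
    (hXi : X i ^ 2 ∈ I) {d : ι →₀ ℕ} (c : R) (h0 : d ≠ 0) (h1 : d ≠ Finsupp.single i 1) :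
    monomial d c ∈ I := by
  by_cases hj : ∃ j ≠ i, d j ≠ 0
  · obtain ⟨j, hji, hdj⟩ := hj
    exact I.mem_of_dvd (X_dvd_monomial.2 (Or.inr hdj)) (hX j hji)
  push Not at hj
  have hd : d = Finsupp.single i (d i) := by
    ext j
    by_cases hji : j = i
    · subst hji; simp
    · simp [hj j hji, Ne.symm hji]
  have h2 : 2 ≤ d i := by
    have h0' : d i ≠ 0 := fun h => h0 (by rw [hd, h, Finsupp.single_zero])
    have h1' : d i ≠ 1 := fun h => h1 (by rw [hd, h])
    omega
  refine I.mem_of_dvd ?_ hXi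
  rw [X_pow_eq_monomial]
  exact monomial_dvd_monomial.2 ⟨Or.inr (hd ▸ Finsupp.single_le_single.2 h2), one_dvd _⟩

theorem MvPolynomial.sub_C_sub_C_mul_X_mem_of_X_mem_of_X_sq_mem (hX : ∀ j ≠ i, X j ∈ I)
    (hXi : X i ^ 2 ∈ I) (p : MvPolynomial ι R) :
    p - C (coeff 0 p) - C (coeff (Finsupp.single i 1) p) * X i ∈ I := by
  classical
  induction p using MvPolynomial.induction_on' with
  | add p q hp hq =>
    convert I.add_mem hp hq using 1
    simp only [coeff_add, map_add]
    ring
  | monomial d c =>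
    by_cases h0 : d = 0
    · subst h0
      simp [coeff_C, (Finsupp.single_ne_zero.2 one_ne_zero).symm]
    by_cases h1 : d = Finsupp.single i 1
    · subst h1
      rw [coeff_monomial, if_neg h0, coeff_monomial, if_pos rfl, X, C_mul_monomial,
        mul_one, map_zero, sub_zero, sub_self]
      exact I.zero_mem
    · rw [coeff_monomial, if_neg h0, coeff_monomial, if_neg h1, map_zero, zero_mul,
        sub_zero, sub_zero]
      exact monomial_mem_of_X_mem_of_X_sq_mem hX hXi c h0 h1

theorem MvPolynomial.mk_eq_of_X_mem_of_X_sq_mem (hX : ∀ j ≠ i, X j ∈ I)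
    (hXi : X i ^ 2 ∈ I) (p : MvPolynomial ι R) :
    Ideal.Quotient.mk I p = Ideal.Quotient.mk I (C (constantCoeff p)) +
      coeff (Finsupp.single i 1) p • Ideal.Quotient.mk I (X i) := by
  rw [← Ideal.Quotient.mkₐ_eq_mk R, ← map_smul, ← map_add, Ideal.Quotient.mkₐ_eq_mk,
    Ideal.Quotient.eq, smul_eq_C_mul, ← sub_sub]
  exact sub_C_sub_C_mul_X_mem_of_X_mem_of_X_sq_mem hX hXi p

end SquareOfVariable

theorem MvPolynomial.constantCoeff_algHom_apply_of_constantCoeff_X {R ι : Type*} [CommRing R]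
    (φ : MvPolynomial ι R →ₐ[R] MvPolynomial ι R) (hφ : ∀ j, constantCoeff (φ (X j)) = 0)
    (p : MvPolynomial ι R) : constantCoeff (φ p) = constantCoeff p := by
  have h : (aeval 0).comp φ = aeval (0 : ι → R) := algHom_ext fun j => by simp [hφ]
  simpa using AlgHom.congr_fun h p

theorem tjurinaA12quot_eq : tjurinaA12quot = Ideal.span {X 0, X 1, X 2 ^ 2, X 3} := by
  have hderiv : Ideal.span {pderiv 0 fA12quot, pderiv 1 fA12quot, pderiv 2 fA12quot,
      pderiv 3 fA12quot} = Ideal.span {X 0, X 1, X 2 ^ 2, X 3} := by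
    have h2 : IsUnit (2 : MvPolynomial (Fin 4) ℂ) := by
      simpa only [map_ofNat] using (by norm_num : IsUnit (2 : ℂ)).map (C (σ := Fin 4))
    have h3 : IsUnit (3 : MvPolynomial (Fin 4) ℂ) := by
      simpa only [map_ofNat] using (by norm_num : IsUnit (3 : ℂ)).map (C (σ := Fin 4))
    rw [show pderiv 0 fA12quot = 2 * X 0 by simp [fA12quot],
      show pderiv 1 fA12quot = 2 * X 1 by simp [fA12quot],
      show pderiv 2 fA12quot = 3 * X 2 ^ 2 by simp [fA12quot],
      show pderiv 3 fA12quot = 2 * X 3 by simp [fA12quot]]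
    exact Ideal.span_insert_eq_span_insert (associated_unit_mul_left _ _ h2) <|
      Ideal.span_insert_eq_span_insert (associated_unit_mul_left _ _ h2) <|
      Ideal.span_insert_eq_span_insert (associated_unit_mul_left _ _ h3) <|
      (associated_unit_mul_left _ _ h2).span_singleton_eq
  have hf : fA12quot ∈ Ideal.span {X 0, X 1, X 2 ^ 2, X 3} := by
    have hmem {g} (hg : g ∈ ({X 0, X 1, X 2 ^ 2, X 3} : Set (MvPolynomial (Fin 4) ℂ))) :
        g ∈ Ideal.span {X 0, X 1, X 2 ^ 2, X 3} := Ideal.subset_span hg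
    rw [show fA12quot = X 0 * X 0 + X 1 * X 1 + X 2 * X 2 ^ 2 + X 3 * X 3 by rw [fA12quot]; ring]
    refine add_mem (add_mem (add_mem ?_ ?_) ?_) ?_ <;> exact Ideal.mul_mem_left _ _ (hmem (by simp))
  have hf' : fA12quot ∈ Ideal.span {pderiv 0 fA12quot, pderiv 1 fA12quot, pderiv 2 fA12quot,
      pderiv 3 fA12quot} := hderiv ▸ hf
  rw [tjurinaA12quot, Ideal.span, Submodule.span_insert_eq_span hf', ← Ideal.span, hderiv]

theorem X_mem_tjurinaA12quot {j : Fin 4} (hj : j ≠ 2) : X j ∈ tjurinaA12quot :=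
  tjurinaA12quot_eq ▸ Ideal.subset_span (by fin_cases j <;> simp_all)

theorem X_two_sq_mem_tjurinaA12quot : X 2 ^ 2 ∈ tjurinaA12quot :=
  tjurinaA12quot_eq ▸ Ideal.subset_span (by simp)

section Automorphism

variable (σ : MvPolynomial (Fin 4) ℂ ≃ₐ[ℂ] MvPolynomial (Fin 4) ℂ)

theorem map_fA12quot (hx : σ (X 0) = C Complex.I * X 0) (hy : σ (X 1) = -(C Complex.I) * X 1)
    (hz : σ (X 2) = -X 2) (hu : σ (X 3) = C Complex.I * X 3) : σ fA12quot = -fA12quot := by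
  have hI : (C Complex.I : MvPolynomial (Fin 4) ℂ) ^ 2 = -1 := by
    rw [← C_pow, Complex.I_sq, map_neg, C_1]
  simp only [fA12quot, map_add, map_pow, hx, hy, hz, hu]
  linear_combination (X 0 ^ 2 + X 1 ^ 2 + X 3 ^ 2) * hI

theorem map_tjurinaA12quot (hx : σ (X 0) = C Complex.I * X 0)
    (hy : σ (X 1) = -(C Complex.I) * X 1) (hz : σ (X 2) = -X 2)
    (hu : σ (X 3) = C Complex.I * X 3) :
    tjurinaA12quot.map σ.toAlgHom.toRingHom = tjurinaA12quot := by
  have hI : IsUnit (C Complex.I : MvPolynomial (Fin 4) ℂ) := (Complex.I_ne_zero.isUnit).map C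
  rw [tjurinaA12quot_eq, Ideal.map_span, Set.image_insert_eq, Set.image_insert_eq,
    Set.image_insert_eq, Set.image_singleton]
  change Ideal.span {σ (X 0), σ (X 1), σ (X 2 ^ 2), σ (X 3)} = _
  rw [hx, hy, map_pow, hz, neg_sq, hu]
  exact Ideal.span_insert_eq_span_insert (associated_unit_mul_left _ _ hI) <|
    Ideal.span_insert_eq_span_insert (associated_unit_mul_left _ _ hI.neg) <|
    Ideal.span_insert_eq_span_insert (Associated.refl _) <|
    (associated_unit_mul_left _ _ hI).span_singleton_eq

theorem constantCoeff_eq_zero_of_map_eq_neg (hx : σ (X 0) = C Complex.I * X 0)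
    (hy : σ (X 1) = -(C Complex.I) * X 1) (hz : σ (X 2) = -X 2)
    (hu : σ (X 3) = C Complex.I * X 3) {p : MvPolynomial (Fin 4) ℂ} (hp : σ p = -p) :
    constantCoeff p = 0 := by
  have hσ : constantCoeff (σ p) = constantCoeff p :=
    constantCoeff_algHom_apply_of_constantCoeff_X σ.toAlgHom (fun j => by fin_cases j <;> simp [hx, hy, hz, hu]) p
  rw [hp, map_neg] at hσ
  exact self_eq_neg.1 hσ.symm

end Automorphism

theorem mk_X_two_ne_zero : Ideal.Quotient.mk tjurinaA12quot (X 2) ≠ 0 := by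
  let ev : MvPolynomial (Fin 4) ℂ →ₐ[ℂ] DualNumber ℂ := aeval ![0, 0, DualNumber.eps, 0]
  have hker : tjurinaA12quot ≤ RingHom.ker ev := by
    rw [tjurinaA12quot_eq, Ideal.span_le]
    rintro g (rfl | rfl | rfl | rfl) <;> simp [ev, sq]
  intro h
  have heps : (DualNumber.eps : DualNumber ℂ) = 0 := by
    simpa [ev] using hker (Ideal.Quotient.eq_zero_iff_mem.1 h)
  simpa using congrArg TrivSqZeroExt.snd heps

/-- Let `σ` be the ℂ-algebra automorphism of `ℂ[x,y,z,u]` with `σ(x) = √-1·x`,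
`σ(y) = -√-1·y`, `σ(z) = -z`, `σ(u) = √-1·u`, and `f = x² + y² + z³ + u²`. Then
`σ(f) = -f`, the Tjurina ideal `I = (f, ∂f/∂x, ∂f/∂y, ∂f/∂z, ∂f/∂u)` satisfies
`σ(I) = I`, and the subspace of `ℂ[x,y,z,u]/I` consisting of the images of polynomials
`h` with `σ(h) = -h` is the one-dimensional ℂ-subspace spanned by the image of `z`. -/
theorem stmt_11 (σ : MvPolynomial (Fin 4) ℂ ≃ₐ[ℂ] MvPolynomial (Fin 4) ℂ)
    (hx : σ (X 0) = C Complex.I * X 0) (hy : σ (X 1) = -(C Complex.I) * X 1)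
    (hz : σ (X 2) = -X 2) (hu : σ (X 3) = C Complex.I * X 3) :
    σ fA12quot = -fA12quot ∧
    tjurinaA12quot.map σ.toAlgHom.toRingHom = tjurinaA12quot ∧
    Submodule.map (Ideal.Quotient.mkₐ ℂ tjurinaA12quot).toLinearMap
        (LinearMap.ker (σ.toLinearMap + LinearMap.id)) =
      Submodule.span ℂ {Ideal.Quotient.mk tjurinaA12quot (X 2)} ∧
    Module.finrank ℂ
      ↥(Submodule.span ℂ {Ideal.Quotient.mk tjurinaA12quot (X 2)}) = 1 := by
  refine ⟨map_fA12quot σ hx hy hz hu, map_tjurinaA12quot σ hx hy hz hu, le_antisymm ?_ ?_,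
    finrank_span_singleton mk_X_two_ne_zero⟩
  · rintro _ ⟨p, hp, rfl⟩
    have hσp : σ p = -p := eq_neg_of_add_eq_zero_left hp
    refine Submodule.mem_span_singleton.2 ⟨coeff (Finsupp.single 2 1) p, ?_⟩
    rw [AlgHom.toLinearMap_apply, Ideal.Quotient.mkₐ_eq_mk,
      mk_eq_of_X_mem_of_X_sq_mem (fun _ => X_mem_tjurinaA12quot) X_two_sq_mem_tjurinaA12quot p,
      constantCoeff_eq_zero_of_map_eq_neg σ hx hy hz hu hσp, map_zero, map_zero, zero_add]
  · rw [Submodule.span_le, Set.singleton_subset_iff]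
    exact ⟨X 2, by simp [hz], by simp [Ideal.Quotient.mkₐ_eq_mk]⟩
end

section
/- Let g ∈ ℂ⟦z,u⟧ be a formal power series, written g = Σ_{i,j} a_{i,j} z^i u^j, such that: (1) a_{i,j} ≠ 0 implies 2i + j ≡ 2 (mod 4) and i + j ≥ 2; (2) a_{0,2} ≠ 0; (3) the ℂ-vector space ℂ⟦z,u⟧/(g, ∂g/∂z, ∂g/∂u) is finite-dimensional. Then there exists a positive integer i₀ and a ℂ-algebra automorphism φ of ℂ⟦z,u⟧ such that φ(g) = z^{2i₀+1} + u². -/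
/-!
The parity condition leaves only even powers of `u` in `g`, and makes the `u`-free terms powers
of `z` with odd exponent at least `3`. If there were no `u`-free terms, `u²` would divide `g`, the
Jacobian ideal would lie in `(u)` and the Milnor algebra would be infinite-dimensional. So
`g = z^m B + u² E` with `m = 2 i₀ + 1` and units `B`, `E`. By Hensel's lemma `B = T^m` and
`E = S²`, and the substitution `z ↦ z T`, `u ↦ u S` sends `z^m + u²` to `g`. It maps the ideal
`(z, u)` onto itself, hence is surjective by completeness, and a surjective endomorphism of a
Noetherian ring is injective.
-/

open MvPowerSeries

noncomputable def mvPowerSeriesPderiv (k : Fin 2) (g : MvPowerSeries (Fin 2) ℂ) :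
    MvPowerSeries (Fin 2) ℂ :=
  fun d => ((d k + 1 : ℕ) : ℂ) * coeff (d + Finsupp.single k 1) g

theorem RingHom.injective_of_surjective_of_isNoetherianRing {R : Type*} [CommRing R]
    [IsNoetherianRing R] (f : R →+* R) (hf : Function.Surjective f) : Function.Injective f := by
  obtain ⟨N, hN⟩ := monotone_stabilizes_iff_noetherian.mpr (inferInstanceAs (IsNoetherian R R))
    ⟨fun n => RingHom.ker (f ^ n), fun m n hmn x hx => by
      simp only [RingHom.mem_ker, RingHom.coe_pow] at hx ⊢
      rw [← Nat.sub_add_cancel hmn, Function.iterate_add_apply, hx, iterate_map_zero]⟩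
  refine (injective_iff_map_eq_zero f).mpr fun x hx => ?_
  obtain ⟨y, rfl⟩ := (hf.iterate N) x
  have hy : y ∈ RingHom.ker (f ^ (N + 1)) := by
    rwa [RingHom.mem_ker, RingHom.coe_pow, Function.iterate_succ_apply']
  have hker : RingHom.ker (f ^ N) = RingHom.ker (f ^ (N + 1)) := hN (N + 1) N.le_succ
  rwa [← RingHom.coe_pow, ← RingHom.mem_ker, hker]

theorem Finsupp.eq_single_zero_of_apply_one_eq_zero {M : Type*} [Zero M] {d : Fin 2 →₀ M}
    (hd : d 1 = 0) : d = Finsupp.single 0 (d 0) := by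
  ext j
  fin_cases j <;> simp [hd]

namespace MvPowerSeries

variable {σ R : Type*} [CommRing R]

theorem mem_span_X_image_of_coeff_eq_zero (s : Finset σ) {f : MvPowerSeries σ R}
    (hf : ∀ d : σ →₀ ℕ, (∀ i ∈ s, d i = 0) → coeff d f = 0) :
    f ∈ Ideal.span (X '' s) := by
  classical
  induction s using Finset.induction_on generalizing f with
  | empty =>
    obtain rfl : f = 0 := by ext d; simpa using hf d
    exact zero_mem _
  | insert i s _ ih =>
    let f₀ : MvPowerSeries σ R := fun d => if d i = 0 then coeff d f else 0
    have coeff_f₀ (d : σ →₀ ℕ) : coeff d f₀ = if d i = 0 then coeff d f else 0 := rfl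
    obtain ⟨q, hq⟩ : X i ∣ f - f₀ := X_dvd_iff.mpr fun d hd => by
      simp [coeff_f₀, hd]
    have hf₀ : f₀ ∈ Ideal.span (X '' s) := ih fun d hd => by
      by_cases hdi : d i = 0
      · simpa [coeff_f₀, hdi] using hf d (by simpa [hdi] using hd)
      · simp [coeff_f₀, hdi]
    rw [← sub_add_cancel f f₀, hq]
    exact add_mem (Ideal.mul_mem_right q _ (Ideal.subset_span ⟨i, by simp, rfl⟩))
      (Ideal.span_mono (Set.image_mono (by simp)) hf₀)

theorem mem_span_range_X_of_constantCoeff_eq_zero [Finite σ] {f : MvPowerSeries σ R}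
    (hf : constantCoeff f = 0) : f ∈ Ideal.span (Set.range X) := by
  have := Fintype.ofFinite σ
  rw [← Set.image_univ, ← Finset.coe_univ]
  refine mem_span_X_image_of_coeff_eq_zero _ fun d hd => ?_
  obtain rfl : d = 0 := by ext i; simpa using hd i
  simpa using hf

theorem exists_pow_eq [Finite σ] (f : MvPowerSeries σ R) {n : ℕ} {c : R}
    (hn : n ≠ 0) (hc : c ^ n = constantCoeff f) (hunit : IsUnit ((n : R) * c ^ (n - 1))) :
    ∃ s, s ^ n = f := by
  obtain ⟨s, hs, -⟩ := HenselianRing.is_henselian (I := Ideal.span (Set.range X))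
    (Polynomial.X ^ n - Polynomial.C f) (Polynomial.monic_X_pow_sub_C f hn) (C c)
    (mem_span_range_X_of_constantCoeff_eq_zero (by simp [hc]))
    (IsUnit.map _ (by simpa [Polynomial.derivative_X_pow] using hunit.map (C (σ := σ))))
  exact ⟨s, sub_eq_zero.mp (by simpa using hs)⟩

theorem exists_pow_eq_of_constantCoeff_ne_zero [Finite σ] {k : Type*} [Field k] [IsAlgClosed k]
    [CharZero k] (f : MvPowerSeries σ k) (hf : constantCoeff f ≠ 0) {n : ℕ} (hn : n ≠ 0) :
    ∃ s, s ^ n = f := by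
  obtain ⟨c, hc⟩ := IsAlgClosed.exists_pow_nat_eq (constantCoeff f) (Nat.pos_of_ne_zero hn)
  have hc0 : c ≠ 0 := by rintro rfl; exact hf (by simpa [hn] using hc.symm)
  exact exists_pow_eq f hn hc (by simp [hn, hc0])

theorem bijective_of_map_span_range_X [Finite σ] [IsNoetherianRing R]
    (φ : MvPowerSeries σ R →ₐ[R] MvPowerSeries σ R)
    (hφ : (Ideal.span (Set.range X)).map φ = Ideal.span (Set.range X)) :
    Function.Bijective φ := by
  have hsurj : Function.Surjective φ := by
    refine surjective_of_mk_map_comp_surjective (I := Ideal.span (Set.range X)) φ.toRingHom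
      (haus := by rw [show Ideal.map φ.toRingHom _ = _ from hφ]; infer_instance) fun y => ?_
    obtain ⟨h, rfl⟩ := Ideal.Quotient.mk_surjective y
    refine ⟨C (constantCoeff h), ?_⟩
    rw [RingHom.comp_apply, AlgHom.toRingHom_eq_coe, RingHom.coe_coe, c_eq_algebraMap, φ.commutes,
      Ideal.Quotient.eq]
    exact hφ.symm ▸ mem_span_range_X_of_constantCoeff_eq_zero (by simp [algebraMap_apply])
  exact ⟨RingHom.injective_of_surjective_of_isNoetherianRing φ.toRingHom hsurj, hsurj⟩

theorem exists_algEquiv_X_eq_X_mul [Finite σ] [IsNoetherianRing R] {U : σ → MvPowerSeries σ R}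
    (hU : ∀ i, IsUnit (U i)) :
    ∃ φ : MvPowerSeries σ R ≃ₐ[R] MvPowerSeries σ R, ∀ i, φ (X i) = X i * U i := by
  let ψ := substAlgHom (R := R) (hasSubst_of_constantCoeff_zero (a := fun i => X i * U i)
    fun i => by simp)
  have hψ : ∀ i, ψ (X i) = X i * U i := substAlgHom_X _
  have hspan : Ideal.span (Set.range fun i => X i * U i) = Ideal.span (Set.range (X (R := R))) := by
    refine le_antisymm (Ideal.span_le.mpr <| Set.range_subset_iff.mpr fun i =>
      Ideal.mul_mem_right _ _ (Ideal.subset_span ⟨i, rfl⟩)) (Ideal.span_le.mpr <|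
      Set.range_subset_iff.mpr fun i => ?_)
    simpa [mul_assoc] using Ideal.mul_mem_right (↑(hU i).unit⁻¹) _
      (Ideal.subset_span ⟨i, rfl⟩ : X i * U i ∈ Ideal.span (Set.range fun i => X i * U i))
  have hmap : (Ideal.span (Set.range X)).map ψ = Ideal.span (Set.range X) := by
    rw [Ideal.map_span, ← Set.range_comp, ← hspan]
    congr 2
    exact funext hψ
  exact ⟨AlgEquiv.ofBijective ψ (bijective_of_map_span_range_X ψ hmap), hψ⟩

theorem not_finite_quotient_span_X {k : Type*} [Field k] {i j : σ} (hij : i ≠ j) :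
    ¬ Module.Finite k (MvPowerSeries σ k ⧸ Ideal.span {X (R := k) i}) := by
  classical
  intro hfin
  refine Module.Finite.not_linearIndependent_of_infinite (R := k)
    (fun n : ℕ => Ideal.Quotient.mkₐ k (Ideal.span {X (R := k) i}) (X j ^ n)) ?_
  rw [linearIndependent_iff']
  intro s c hs n hn
  have hmem : ∑ m ∈ s, c m • X j ^ m ∈ Ideal.span {(X i : MvPowerSeries σ k)} := by
    rw [← Ideal.Quotient.eq_zero_iff_mem, ← Ideal.Quotient.mkₐ_eq_mk k, map_sum]
    simpa only [map_smul] using hs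
  simpa [coeff_X_pow, (Finsupp.single_injective j).eq_iff, hn, hij] using
    X_dvd_iff.mp (Ideal.mem_span_singleton.mp hmem) (Finsupp.single j n) (by simp [hij])

theorem exists_eq_X_pow_mul_add_X_sq_mul (g : MvPowerSeries (Fin 2) R) {m : ℕ}
    (hlow : ∀ i < m, coeff (Finsupp.single 0 i) g = 0) (hodd : ∀ d, d 1 = 1 → coeff d g = 0) :
    ∃ B E, g = X 0 ^ m * B + X 1 ^ 2 * E ∧ constantCoeff B = coeff (Finsupp.single 0 m) g ∧
      constantCoeff E = coeff (Finsupp.single 1 2) g := by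
  let a : MvPowerSeries (Fin 2) R := fun d => if d 1 = 0 then coeff d g else 0
  have coeff_a (d : Fin 2 →₀ ℕ) : coeff d a = if d 1 = 0 then coeff d g else 0 := rfl
  obtain ⟨B, hB⟩ : X 0 ^ m ∣ a := X_pow_dvd_iff.mpr fun d hd => by
    rw [coeff_a]
    split_ifs with hd1
    · rw [Finsupp.eq_single_zero_of_apply_one_eq_zero hd1]
      exact hlow _ hd
    · rfl
  obtain ⟨E, hE⟩ : X 1 ^ 2 ∣ g - a := X_pow_dvd_iff.mpr fun d hd => by
    rw [map_sub, coeff_a]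
    split_ifs with hd1
    · exact sub_self _
    · rw [hodd d (by omega), sub_zero]
  have coeff_X_pow_mul (s : Fin 2) (n : ℕ) (f : MvPowerSeries (Fin 2) R) :
      coeff (Finsupp.single s n) (X s ^ n * f) = constantCoeff f := by
    simpa [X_pow_eq] using coeff_add_monomial_mul (Finsupp.single s n) 0 f (1 : R)
  refine ⟨B, E, by rw [← hB, ← hE, add_sub_cancel], ?_, ?_⟩
  · rw [← coeff_X_pow_mul, ← hB, coeff_a, if_pos (by simp)]
  · rw [← coeff_X_pow_mul, ← hE, map_sub, coeff_a, if_neg (by simp), sub_zero]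

theorem exists_algEquiv_X_pow_mul_add_X_sq_mul {k : Type*} [Field k] [IsAlgClosed k] [CharZero k]
    {m : ℕ} (hm : m ≠ 0) {B E : MvPowerSeries (Fin 2) k} (hB : constantCoeff B ≠ 0)
    (hE : constantCoeff E ≠ 0) :
    ∃ φ : MvPowerSeries (Fin 2) k ≃ₐ[k] MvPowerSeries (Fin 2) k,
      φ (X 0 ^ m * B + X 1 ^ 2 * E) = X 0 ^ m + X 1 ^ 2 := by
  obtain ⟨T, rfl⟩ := exists_pow_eq_of_constantCoeff_ne_zero B hB hm
  obtain ⟨S, rfl⟩ := exists_pow_eq_of_constantCoeff_ne_zero E hE two_ne_zero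
  have isUnit_of_pow {n : ℕ} (hn : n ≠ 0) {f : MvPowerSeries (Fin 2) k}
      (hf : constantCoeff (f ^ n) ≠ 0) : IsUnit f :=
    (isUnit_pow_iff hn).mp (isUnit_iff_constantCoeff.mpr (isUnit_iff_ne_zero.mpr hf))
  obtain ⟨ψ, hψ⟩ := exists_algEquiv_X_eq_X_mul (U := ![T, S]) fun i => by
    fin_cases i
    exacts [isUnit_of_pow hm hB, isUnit_of_pow two_ne_zero hE]
  refine ⟨ψ.symm, (AlgEquiv.symm_apply_eq ψ).mpr ?_⟩
  simp [hψ, mul_pow]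

end MvPowerSeries

theorem not_finiteDimensional_of_X_one_sq_dvd {g : MvPowerSeries (Fin 2) ℂ} (hg : X 1 ^ 2 ∣ g) :
    ¬ FiniteDimensional ℂ (MvPowerSeries (Fin 2) ℂ ⧸
      Ideal.span {g, mvPowerSeriesPderiv 0 g, mvPowerSeriesPderiv 1 g}) := by
  intro hfin
  have hcoeff := X_pow_dvd_iff.mp hg
  have hle : Ideal.span {g, mvPowerSeriesPderiv 0 g, mvPowerSeriesPderiv 1 g} ≤
      Ideal.span {X 1} := by
    simp only [Ideal.span_le, Set.insert_subset_iff, Set.singleton_subset_iff, SetLike.mem_coe,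
      Ideal.mem_span_singleton, X_dvd_iff]
    refine ⟨fun d hd => hcoeff d (by omega), fun d hd => ?_, fun d hd => ?_⟩ <;>
      exact mul_eq_zero_of_right _ (hcoeff _ (by simp [hd]))
  exact not_finite_quotient_span_X (by decide : (1 : Fin 2) ≠ 0) <|
    Module.Finite.of_surjective (Ideal.Quotient.factorₐ ℂ hle).toLinearMap
      (Ideal.Quotient.factor_surjective hle)

/-- Let `g = Σ a_{i,j} z^i u^j ∈ ℂ⟦z,u⟧` be such that (1) `a_{i,j} ≠ 0` implies
`2i + j ≡ 2 (mod 4)` and `i + j ≥ 2`; (2) `a_{0,2} ≠ 0`; (3) `ℂ⟦z,u⟧/(g, ∂g/∂z, ∂g/∂u)`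
is finite-dimensional over ℂ. Then there is a positive integer `i₀` and a ℂ-algebra
automorphism `φ` of `ℂ⟦z,u⟧` with `φ(g) = z^(2i₀+1) + u²`. Here `z = X 0`, `u = X 1`. -/
theorem stmt_12 (g : MvPowerSeries (Fin 2) ℂ)
    (h1 : ∀ d : Fin 2 →₀ ℕ, coeff d g ≠ 0 →
      (2 * d 0 + d 1) % 4 = 2 ∧ 2 ≤ d 0 + d 1)
    (h2 : coeff (Finsupp.single 1 2) g ≠ 0)
    (h3 : FiniteDimensional ℂ
      (MvPowerSeries (Fin 2) ℂ ⧸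
        Ideal.span {g, mvPowerSeriesPderiv 0 g, mvPowerSeriesPderiv 1 g})) :
    ∃ i₀ : ℕ, 0 < i₀ ∧
      ∃ φ : MvPowerSeries (Fin 2) ℂ ≃ₐ[ℂ] MvPowerSeries (Fin 2) ℂ,
        φ g = (X 0) ^ (2 * i₀ + 1) + (X 1) ^ 2 := by
  have hodd : ∀ d : Fin 2 →₀ ℕ, d 1 = 1 → coeff d g = 0 := fun d hd => by
    by_contra h
    have := (h1 d h).1
    omega
  have hex : ∃ i, coeff (Finsupp.single 0 i) g ≠ 0 := by
    by_contra! h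
    refine not_finiteDimensional_of_X_one_sq_dvd (X_pow_dvd_iff.mpr fun d hd => ?_) h3
    obtain hd1 | hd1 : d 1 = 0 ∨ d 1 = 1 := by omega
    · rw [Finsupp.eq_single_zero_of_apply_one_eq_zero hd1]
      exact h _
    · exact hodd d hd1
  obtain ⟨m, hm, hlow⟩ : ∃ m, coeff (Finsupp.single 0 m) g ≠ 0 ∧
      ∀ i < m, coeff (Finsupp.single 0 i) g = 0 :=
    ⟨Nat.find hex, Nat.find_spec hex, fun i hi => not_not.mp (Nat.find_min hex hi)⟩
  obtain ⟨B, E, hg, hB, hE⟩ := exists_eq_X_pow_mul_add_X_sq_mul g hlow hodd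
  have hm_odd := h1 _ hm
  simp only [Finsupp.single_eq_same, ne_eq, one_ne_zero, not_false_eq_true,
    Finsupp.single_eq_of_ne, add_zero] at hm_odd
  obtain ⟨φ, hφ⟩ := exists_algEquiv_X_pow_mul_add_X_sq_mul (m := m) (by omega) (hB ▸ hm) (hE ▸ h2)
  refine ⟨m / 2, by omega, φ, ?_⟩
  rw [hg, hφ, show 2 * (m / 2) + 1 = m by omega]
end
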